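/- Let Ω ⊆ 𝔽ⁿ be a finitely generated P-closed set and let {F₁,…,F_M} be a dual P-basis of a P-basis of Ω. Then F₁,…,F_M are left linearly independent over 𝔽, their images under the canonical projection R → R/I(Ω) form a left 𝔽-basis of the quotient left 𝔽-vector space R/I(Ω), and hence dim_𝔽(R/I(Ω)) = Rk(Ω). In particular, if 𝔽ⁿ is finitely generated as a P-closed set, then the minimal skew polynomial ring R/I(𝔽ⁿ) is a left 𝔽-vector space of finite dimension Rk(𝔽ⁿ). -/

import Mathlib

/- Common setup: free multivariate skew polynomial rings over a division ring. -/

open Matrix Finsupp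

/-- The underlying left `𝔽`-module of the free multivariate skew polynomial ring:
the free left `𝔽`-module with basis the free monoid on `n` symbols. -/
abbrev SkewPoly (𝔽 : Type*) [DivisionRing 𝔽] (n : ℕ) : Type _ := FreeMonoid (Fin n) →₀ 𝔽

namespace SkewPoly

variable {𝔽 : Type*} [DivisionRing 𝔽] {n : ℕ}

/-- The variable `xᵢ` as a skew polynomial. -/
noncomputable def X (𝔽 : Type*) [DivisionRing 𝔽] {n : ℕ} (i : Fin n) : SkewPoly 𝔽 n :=
  Finsupp.single (FreeMonoid.of i) 1

/-- The constant `a` as a skew polynomial (coefficient on the empty word). -/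
noncomputable def C {𝔽 : Type*} [DivisionRing 𝔽] (n : ℕ) (a : 𝔽) :
    SkewPoly 𝔽 n := Finsupp.single 1 a

/-- The degree of a skew polynomial: the maximal length of a word in its support
(`⊥` for the zero polynomial). -/
noncomputable def deg (F : SkewPoly 𝔽 n) : WithBot ℕ :=
  F.support.sup fun m => ((FreeMonoid.length m : ℕ) : WithBot ℕ)

/-- A matrix morphism `σ : 𝔽 → Mₙ(𝔽)`: a unital ring homomorphism. -/
def IsMatrixMorphism (σ : 𝔽 → Matrix (Fin n) (Fin n) 𝔽) : Prop :=
  σ 1 = 1 ∧ (∀ a b : 𝔽, σ (a + b) = σ a + σ b) ∧ (∀ a b : 𝔽, σ (a * b) = σ a * σ b)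

/-- A `σ`-vector derivation `δ : 𝔽 → 𝔽ⁿ`: additive with `δ(ab) = σ(a)δ(b) + δ(a)b`. -/
def IsVectorDerivation (σ : 𝔽 → Matrix (Fin n) (Fin n) 𝔽) (δ : 𝔽 → Fin n → 𝔽) : Prop :=
  (∀ a b : 𝔽, δ (a + b) = δ a + δ b) ∧
    (∀ a b : 𝔽, δ (a * b) = σ a *ᵥ δ b + fun i => δ a i * b)

/-- A multiplication on the free module `SkewPoly 𝔽 n` making it a ring (with the
existing addition) whose identity is the empty word, which restricts to concatenation
on monomials, is additive on degrees of nonzero elements, and for which left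
multiplication by constants is scalar multiplication. -/
structure RawMul (𝔽 : Type*) [DivisionRing 𝔽] (n : ℕ) where
  /-- the multiplication -/
  mul : SkewPoly 𝔽 n → SkewPoly 𝔽 n → SkewPoly 𝔽 n
  mul_add : ∀ F G H : SkewPoly 𝔽 n, mul F (G + H) = mul F G + mul F H
  add_mul : ∀ F G H : SkewPoly 𝔽 n, mul (F + G) H = mul F H + mul G H
  mul_assoc : ∀ F G H : SkewPoly 𝔽 n, mul (mul F G) H = mul F (mul G H)
  one_mul : ∀ F : SkewPoly 𝔽 n, mul (C n 1) F = F
  mul_one : ∀ F : SkewPoly 𝔽 n, mul F (C n 1) = F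
  mono_mul_mono : ∀ m m' : FreeMonoid (Fin n),
    mul (Finsupp.single m 1) (Finsupp.single m' 1) = Finsupp.single (m * m') 1
  const_mul : ∀ (a : 𝔽) (F : SkewPoly 𝔽 n), mul (C n a) F = a • F
  deg_mul : ∀ F G : SkewPoly 𝔽 n, F ≠ 0 → G ≠ 0 → deg (mul F G) = deg F + deg G

/-- The multiplication `S` satisfies the commutation rule
`xᵢ a = Σⱼ σ_{i,j}(a) xⱼ + δᵢ(a)`. -/
def HasCommRule (S : RawMul 𝔽 n) (σ : 𝔽 → Matrix (Fin n) (Fin n) 𝔽)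
    (δ : 𝔽 → Fin n → 𝔽) : Prop :=
  ∀ (i : Fin n) (a : 𝔽),
    S.mul (X 𝔽 i) (C n a) =
      (∑ j : Fin n, Finsupp.single (FreeMonoid.of j) (σ a i j)) + C n (δ a i)

/-- `F = Σᵢ Gᵢ (xᵢ - aᵢ) + b`, i.e. `b` is a remainder of `F` upon right division
by `x₁ - a₁, …, xₙ - aₙ`; equivalently `F - b` lies in the left ideal generated by
the `xᵢ - aᵢ`. -/
def Decomposes (S : RawMul 𝔽 n) (a : Fin n → 𝔽) (F : SkewPoly 𝔽 n) (b : 𝔽) : Prop :=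
  ∃ G : Fin n → SkewPoly 𝔽 n,
    F = (∑ i : Fin n, S.mul (G i) (X 𝔽 i - C n (a i))) + C n b

/-- The evaluation of `F` at the point `a`: the unique `b ∈ 𝔽` such that `F - b`
lies in the left ideal generated by `x₁ - a₁, …, xₙ - aₙ`. -/
noncomputable def eval (S : RawMul 𝔽 n) (a : Fin n → 𝔽) (F : SkewPoly 𝔽 n) : 𝔽 :=
  letI := Classical.propDecidable (∃ b : 𝔽, Decomposes S a F b)
  if h : ∃ b : 𝔽, Decomposes S a F b then h.choose else 0

/-- The `(σ,δ)`-conjugate `a^c = σ(c) a c⁻¹ + δ(c) c⁻¹` of `a` with respect to `c`. -/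
noncomputable def conj (σ : 𝔽 → Matrix (Fin n) (Fin n) 𝔽) (δ : 𝔽 → Fin n → 𝔽)
    (a : Fin n → 𝔽) (c : 𝔽) : Fin n → 𝔽 :=
  fun i => (σ c *ᵥ a) i * c⁻¹ + δ c i * c⁻¹

/-- `I(Ω)`: the set of skew polynomials vanishing at every point of `Ω`. -/
def zeroIdeal (S : RawMul 𝔽 n) (Ω : Set (Fin n → 𝔽)) : Set (SkewPoly 𝔽 n) :=
  {F | ∀ a ∈ Ω, eval S a F = 0}

/-- The left ideal of `SkewPoly 𝔽 n` generated by `x₁ - a₁, …, xₙ - aₙ`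
(the set of sums of left multiples of the generators). -/
def pointIdeal (S : RawMul 𝔽 n) (a : Fin n → 𝔽) : Set (SkewPoly 𝔽 n) :=
  {F | ∃ G : Fin n → SkewPoly 𝔽 n, F = ∑ i : Fin n, S.mul (G i) (X 𝔽 i - C n (a i))}

/-- The P-closure `Ω̄ = Z(I(Ω))` of a set of points `Ω`. -/
def pClosure (S : RawMul 𝔽 n) (Ω : Set (Fin n → 𝔽)) : Set (Fin n → 𝔽) :=
  {a | ∀ F ∈ zeroIdeal S Ω, eval S a F = 0}

/-- `Ω` is P-closed if it equals its P-closure. -/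
def IsPClosed (S : RawMul 𝔽 n) (Ω : Set (Fin n → 𝔽)) : Prop := pClosure S Ω = Ω

/-- `B` is P-independent: no point of `B` lies in the P-closure of the rest. -/
def PIndep (S : RawMul 𝔽 n) (B : Set (Fin n → 𝔽)) : Prop :=
  ∀ a ∈ B, a ∉ pClosure S (B \ {a})

/-- `B` is a P-basis of `Ω`: a P-independent subset of `Ω` whose P-closure is `Ω`. -/
def IsPBasis (S : RawMul 𝔽 n) (B Ω : Set (Fin n → 𝔽)) : Prop :=
  B ⊆ Ω ∧ PIndep S B ∧ pClosure S B = Ω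

/-- `Ω` is finitely generated: it is the P-closure of a finite subset of itself. -/
def FinGen (S : RawMul 𝔽 n) (Ω : Set (Fin n → 𝔽)) : Prop :=
  ∃ G : Set (Fin n → 𝔽), G.Finite ∧ G ⊆ Ω ∧ pClosure S G = Ω

/-- The rank of a P-closed set: the (common) cardinality of its P-bases. -/
noncomputable def pRank (S : RawMul 𝔽 n) (Ω : Set (Fin n → 𝔽)) : ℕ :=
  sInf {k : ℕ | ∃ B : Finset (Fin n → 𝔽), IsPBasis S ↑B Ω ∧ B.card = k}

/-- The image of the evaluation map `E_Ω : R → 𝔽^Ω`, as a left `𝔽`-subspace of `𝔽^Ω`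
(the span of the image; the image is itself a subspace since evaluation is left linear). -/
noncomputable def evalSpan (S : RawMul 𝔽 n) (Ω : Set (Fin n → 𝔽)) :
    Submodule 𝔽 (↥Ω → 𝔽) :=
  Submodule.span 𝔽 (Set.range fun F : SkewPoly 𝔽 n => fun a : ↥Ω => eval S ↑a F)

/-- `I` is a two-sided ideal with respect to the multiplication `S`. -/
def IsTwoSidedIdealSet (S : RawMul 𝔽 n) (I : Set (SkewPoly 𝔽 n)) : Prop :=
  (0 : SkewPoly 𝔽 n) ∈ I ∧ (∀ F ∈ I, ∀ G ∈ I, F + G ∈ I) ∧ (∀ F ∈ I, -F ∈ I) ∧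
    (∀ F ∈ I, ∀ G : SkewPoly 𝔽 n, S.mul G F ∈ I) ∧
    (∀ F ∈ I, ∀ G : SkewPoly 𝔽 n, S.mul F G ∈ I)


/-- The left row-rank of the skew Vandermonde matrix `V_d(G)`: the dimension of the
left `𝔽`-span of its rows `(N_m(c))_{c ∈ G}`, indexed by the words `m` of length `< d`,
where `N_m(c)` is the evaluation of the monomial `m` at the point `c`. -/
noncomputable def vandermondeRank (S : RawMul 𝔽 n) (G : Finset (Fin n → 𝔽)) (d : ℕ) :
    Cardinal :=
  Module.rank 𝔽 ↥(Submodule.span 𝔽 (Set.range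
    fun m : {m : FreeMonoid (Fin n) // FreeMonoid.length m < d} =>
      fun c : ↥G => eval S ↑c (Finsupp.single (m : FreeMonoid (Fin n)) (1 : 𝔽))))

end SkewPoly

open SkewPoly

/-
Evaluation is well defined because `Σᵢ Gᵢ (xᵢ - aᵢ)` is never a nonzero constant (compare
top-degree coefficients), and it is left `𝔽`-linear. If `b₁, …, b_M` is a P-basis of `Ω`, a
polynomial vanishing at the `bⱼ` vanishes on their P-closure `Ω`, so `I(Ω)` is the kernel of
`H ↦ (H(bⱼ))ⱼ : R → 𝔽^M`. This map sends a dual P-basis to the standard basis, so it is onto and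
induces `R/I(Ω) ≅ 𝔽^M` carrying the classes of the `Fᵢ` to the standard basis. P-independence
gives every finite P-basis a dual one, so all finite P-bases have `dim R/I(Ω)` elements; a
finitely generated `Ω` has a finite P-basis (a generating set of minimal size), which settles
`Ω = 𝔽ⁿ`.
-/

namespace SkewPoly

variable {𝔽 : Type*} [DivisionRing 𝔽] {n : ℕ}

namespace RawMul

variable (S : RawMul 𝔽 n)

noncomputable def mulLeft (F : SkewPoly 𝔽 n) : SkewPoly 𝔽 n →+ SkewPoly 𝔽 n :=
  AddMonoidHom.mk' (S.mul F) (S.mul_add F)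

noncomputable def mulRight (H : SkewPoly 𝔽 n) : SkewPoly 𝔽 n →+ SkewPoly 𝔽 n :=
  AddMonoidHom.mk' (S.mul · H) (fun F G => S.add_mul F G H)

theorem zero_mul (H : SkewPoly 𝔽 n) : S.mul 0 H = 0 := (S.mulRight H).map_zero

theorem mul_zero (F : SkewPoly 𝔽 n) : S.mul F 0 = 0 := (S.mulLeft F).map_zero

theorem mul_sub (F G H : SkewPoly 𝔽 n) : S.mul F (G - H) = S.mul F G - S.mul F H :=
  (S.mulLeft F).map_sub G H

theorem sub_mul (F G H : SkewPoly 𝔽 n) : S.mul (F - G) H = S.mul F H - S.mul G H :=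
  (S.mulRight H).map_sub F G

theorem mul_sum {ι : Type*} (s : Finset ι) (F : SkewPoly 𝔽 n) (G : ι → SkewPoly 𝔽 n) :
    S.mul F (∑ i ∈ s, G i) = ∑ i ∈ s, S.mul F (G i) :=
  map_sum (S.mulLeft F) G s

theorem smul_mul (c : 𝔽) (F G : SkewPoly 𝔽 n) : S.mul (c • F) G = c • S.mul F G := by
  rw [← S.const_mul, ← S.const_mul, S.mul_assoc]

theorem single_mul_X (m : FreeMonoid (Fin n)) (c : 𝔽) (j : Fin n) :
    S.mul (Finsupp.single m c) (X 𝔽 j) = Finsupp.single (m * FreeMonoid.of j) c := by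
  rw [← _root_.mul_one c, ← smul_eq_mul, ← Finsupp.smul_single, S.smul_mul, X, S.mono_mul_mono,
    Finsupp.smul_single]

theorem mul_X_apply_mul_of (F : SkewPoly 𝔽 n) (i j : Fin n) (m : FreeMonoid (Fin n)) :
    S.mul F (X 𝔽 j) (m * FreeMonoid.of i) = if j = i then F m else 0 := by
  classical
  induction F using Finsupp.induction_linear with
  | zero => simp [S.zero_mul]
  | add F G hF hG => simp only [S.add_mul, Finsupp.add_apply, hF, hG, ite_add_zero]
  | single m' c =>
    have hinj : m' * FreeMonoid.of j = m * FreeMonoid.of i ↔ j = i ∧ m' = m := by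
      rw [← FreeMonoid.toList.injective.eq_iff]
      simp only [FreeMonoid.toList_mul, FreeMonoid.toList_of]
      rw [List.append_singleton_inj, FreeMonoid.toList.injective.eq_iff, and_comm]
    simp only [S.single_mul_X, Finsupp.single_apply, hinj, ite_and]

end RawMul

theorem deg_le_iff {F : SkewPoly 𝔽 n} {d : ℕ} :
    deg F ≤ d ↔ ∀ m, d < FreeMonoid.length m → F m = 0 := by
  simp only [deg, Finset.sup_le_iff, Finsupp.mem_support_iff]
  refine forall_congr' fun m => ⟨fun h hlt => ?_, fun h hne => ?_⟩
  · by_contra hne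
    exact absurd (h hne) (by exact_mod_cast hlt.not_ge)
  · by_contra hle
    exact hne (h (by exact_mod_cast not_le.1 hle))

theorem deg_C_le (a : 𝔽) : deg (C n a) ≤ 0 :=
  deg_le_iff.2 fun _ hm => Finsupp.single_eq_of_ne (by rintro rfl; simp at hm)

theorem deg_mul_C_le (S : RawMul 𝔽 n) (G : SkewPoly 𝔽 n) (a : 𝔽) :
    deg (S.mul G (C n a)) ≤ deg G := by
  by_cases hG : G = 0
  · simp [hG, S.zero_mul]
  by_cases ha : a = 0
  · simp [ha, C, S.mul_zero, deg]
  calc deg (S.mul G (C n a)) = deg G + deg (C n a) :=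
        S.deg_mul _ _ hG (Finsupp.single_ne_zero.2 ha)
    _ ≤ deg G + 0 := by gcongr; exact deg_C_le a
    _ = deg G := add_zero _

/-- Compare coefficients at `m xᵢ` with `m` of maximal length among the supports of the `Gᵢ`:
only `Gᵢ xᵢ` contributes there, while `Σⱼ Gⱼ aⱼ + c` has degree at most `|m|`. -/
theorem eq_zero_of_sum_mul_sub_add_C_eq_zero (S : RawMul 𝔽 n) {a : Fin n → 𝔽}
    {G : Fin n → SkewPoly 𝔽 n} {c : 𝔽}
    (h : ∑ i, S.mul (G i) (X 𝔽 i - C n (a i)) + C n c = 0) : c = 0 := by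
  set P := ∑ i, S.mul (G i) (C n (a i)) - C n c with hPdef
  have hP : ∑ i, S.mul (G i) (X 𝔽 i) = P := by
    simp only [S.mul_sub, Finset.sum_sub_distrib] at h
    rw [← sub_eq_zero, ← h, hPdef]; abel
  have hcoeff : ∀ i m, G i m = P (m * FreeMonoid.of i) := by
    intro i m
    simp [← hP, Finsupp.finsetSum_apply, S.mul_X_apply_mul_of]
  have hdeg : ∀ d : ℕ, (∀ j m, d < FreeMonoid.length m → G j m = 0) →
      ∀ m, d < FreeMonoid.length m → P m = 0 := by
    intro d hGd m hm
    have hmul : ∀ j, S.mul (G j) (C n (a j)) m = 0 := fun j =>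
      deg_le_iff.1 ((deg_mul_C_le S _ _).trans (deg_le_iff.2 (hGd j))) m hm
    have hC : C n c m = 0 := deg_le_iff.1 ((deg_C_le c).trans (by simp)) m hm
    simp [P, hmul, hC]
  by_cases hG : ∀ i, G i = 0
  · simpa [hG, S.zero_mul, C] using h
  push Not at hG
  obtain ⟨i, hi⟩ := hG
  obtain ⟨⟨j, m⟩, hjm, hmax⟩ := (Finset.univ.sigma fun j => (G j).support).exists_max_image
    (fun p => FreeMonoid.length p.2) ⟨⟨i, _⟩, Finset.mem_sigma.2
      ⟨Finset.mem_univ i, (Finsupp.support_nonempty_iff.2 hi).choose_spec⟩⟩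
  have hbound : ∀ j' m', FreeMonoid.length m < FreeMonoid.length m' → G j' m' = 0 := by
    intro j' m' hlt
    by_contra hne
    exact (hmax ⟨j', m'⟩ (by simpa using hne)).not_gt hlt
  have hzero : G j m = 0 := by
    rw [hcoeff, hdeg _ hbound]
    simp [FreeMonoid.length_mul]
  exact (Finsupp.mem_support_iff.1 (Finset.mem_sigma.1 hjm).2) hzero |>.elim

section Evaluation

variable {σ : 𝔽 → Matrix (Fin n) (Fin n) 𝔽} {δ : 𝔽 → Fin n → 𝔽} {S : RawMul 𝔽 n}
  {a : Fin n → 𝔽}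

theorem decomposes_zero : Decomposes S a 0 0 :=
  ⟨0, by simp [S.zero_mul, C]⟩

theorem Decomposes.add {F F' : SkewPoly 𝔽 n} {b b' : 𝔽} (h : Decomposes S a F b)
    (h' : Decomposes S a F' b') : Decomposes S a (F + F') (b + b') := by
  obtain ⟨G, rfl⟩ := h
  obtain ⟨G', rfl⟩ := h'
  refine ⟨G + G', ?_⟩
  simp only [Pi.add_apply, S.add_mul, Finset.sum_add_distrib, C, Finsupp.single_add]
  abel

theorem Decomposes.sub {F F' : SkewPoly 𝔽 n} {b b' : 𝔽} (h : Decomposes S a F b)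
    (h' : Decomposes S a F' b') : Decomposes S a (F - F') (b - b') := by
  obtain ⟨G, rfl⟩ := h
  obtain ⟨G', rfl⟩ := h'
  refine ⟨G - G', ?_⟩
  simp only [Pi.sub_apply, S.sub_mul, Finset.sum_sub_distrib, C, Finsupp.single_sub]
  abel

theorem Decomposes.smul {F : SkewPoly 𝔽 n} {b : 𝔽} (c : 𝔽) (h : Decomposes S a F b) :
    Decomposes S a (c • F) (c * b) := by
  obtain ⟨G, rfl⟩ := h
  refine ⟨fun i => c • G i, ?_⟩
  simp only [smul_add, Finset.smul_sum, S.smul_mul, C, Finsupp.smul_single, smul_eq_mul]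

theorem Decomposes.eq {F : SkewPoly 𝔽 n} {b b' : 𝔽} (h : Decomposes S a F b)
    (h' : Decomposes S a F b') : b = b' := by
  obtain ⟨G, hG⟩ := sub_self F ▸ h.sub h'
  exact sub_eq_zero.1 (eq_zero_of_sum_mul_sub_add_C_eq_zero S hG.symm)

/-- By the commutation rule, `xᵢ b = Σⱼ σ_{i,j}(b) (xⱼ - aⱼ) + (Σⱼ σ_{i,j}(b) aⱼ + δᵢ(b))`. -/
theorem Decomposes.X_mul (hS : HasCommRule S σ δ) {F : SkewPoly 𝔽 n} {b : 𝔽}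
    (h : Decomposes S a F b) (i : Fin n) :
    Decomposes S a (S.mul (X 𝔽 i) F) (∑ j, σ b i j * a j + δ b i) := by
  obtain ⟨G, rfl⟩ := h
  refine ⟨fun j => S.mul (X 𝔽 i) (G j) + C n (σ b i j), ?_⟩
  have hC : ∀ j, S.mul (C n (σ b i j)) (X 𝔽 j - C n (a j)) =
      Finsupp.single (FreeMonoid.of j) (σ b i j) - C n (σ b i j * a j) := fun j => by
    rw [S.const_mul, smul_sub, X, C, C, Finsupp.smul_single, Finsupp.smul_single, smul_eq_mul,
      smul_eq_mul, _root_.mul_one]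
  rw [S.mul_add, S.mul_sum, hS i b]
  simp only [S.add_mul, ← S.mul_assoc, Finset.sum_add_distrib, hC, Finset.sum_sub_distrib]
  simp only [C, Finsupp.single_add, Finsupp.single_finsetSum]
  abel

theorem exists_decomposes (hS : HasCommRule S σ δ) (F : SkewPoly 𝔽 n) :
    ∃ b, Decomposes S a F b := by
  induction F using Finsupp.induction_linear with
  | zero => exact ⟨0, decomposes_zero⟩
  | add F G hF hG =>
    obtain ⟨b, hb⟩ := hF
    obtain ⟨b', hb'⟩ := hG
    exact ⟨b + b', hb.add hb'⟩
  | single m c =>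
    have hmono : ∀ m : FreeMonoid (Fin n), ∃ b, Decomposes S a (Finsupp.single m 1) b := by
      intro m
      induction m using FreeMonoid.inductionOn' with
      | one => exact ⟨1, 0, by simp [S.zero_mul, C]⟩
      | of_mul i m ih =>
        obtain ⟨b, hb⟩ := ih
        exact ⟨_, S.mono_mul_mono (FreeMonoid.of i) m ▸ hb.X_mul hS i⟩
    obtain ⟨b, hb⟩ := hmono m
    refine ⟨c * b, ?_⟩
    simpa [Finsupp.smul_single] using hb.smul c

theorem eval_eq_of_decomposes {F : SkewPoly 𝔽 n} {b : 𝔽} (h : Decomposes S a F b) :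
    eval S a F = b := by
  have hex : ∃ b, Decomposes S a F b := ⟨b, h⟩
  rw [eval, dif_pos hex]
  exact hex.choose_spec.eq h

theorem decomposes_eval (hS : HasCommRule S σ δ) (F : SkewPoly 𝔽 n) :
    Decomposes S a F (eval S a F) := by
  obtain ⟨b, hb⟩ := exists_decomposes hS F
  rwa [eval_eq_of_decomposes hb]

variable (hS : HasCommRule S σ δ)

noncomputable def evalₗ (a : Fin n → 𝔽) : SkewPoly 𝔽 n →ₗ[𝔽] 𝔽 where
  toFun := eval S a
  map_add' F G :=
    eval_eq_of_decomposes ((decomposes_eval hS F).add (decomposes_eval hS G))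
  map_smul' c F := eval_eq_of_decomposes ((decomposes_eval hS F).smul c)

@[simp]
theorem evalₗ_apply (a : Fin n → 𝔽) (F : SkewPoly 𝔽 n) : evalₗ hS a F = eval S a F := rfl

theorem span_zeroIdeal (Ω : Set (Fin n → 𝔽)) :
    Submodule.span 𝔽 (zeroIdeal S Ω) = ⨅ a ∈ Ω, LinearMap.ker (evalₗ hS a) := by
  have h : zeroIdeal S Ω = ↑(⨅ a ∈ Ω, LinearMap.ker (evalₗ hS a)) := by
    ext F
    simp [zeroIdeal]
  rw [h, Submodule.span_eq]

end Evaluation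

section PClosure

variable {S : RawMul 𝔽 n}

theorem subset_pClosure (A : Set (Fin n → 𝔽)) : A ⊆ pClosure S A :=
  fun _ ha _ hF => hF _ ha

theorem zeroIdeal_pClosure (A : Set (Fin n → 𝔽)) :
    zeroIdeal S (pClosure S A) = zeroIdeal S A :=
  Set.Subset.antisymm (fun _ hF a ha => hF a (subset_pClosure A ha)) fun _ hF _ ha => ha _ hF

theorem pClosure_insert_of_mem {A : Set (Fin n → 𝔽)} {a : Fin n → 𝔽} (ha : a ∈ pClosure S A) :
    pClosure S (insert a A) = pClosure S A := by
  have h : zeroIdeal S (insert a A) = zeroIdeal S A :=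
    Set.Subset.antisymm (fun _ hF b hb => hF b (Set.mem_insert_of_mem a hb))
      fun F hF => Set.forall_mem_insert.2 ⟨ha F hF, hF⟩
  rw [pClosure, h, pClosure]

/-- A generating set of minimal cardinality is P-independent. -/
theorem FinGen.exists_finset_isPBasis {Ω : Set (Fin n → 𝔽)} (h : FinGen S Ω) :
    ∃ B : Finset (Fin n → 𝔽), IsPBasis S ↑B Ω := by
  classical
  have hex : ∃ k, ∃ B : Finset (Fin n → 𝔽), ↑B ⊆ Ω ∧ pClosure S ↑B = Ω ∧ B.card = k := by
    obtain ⟨G, hGfin, hGΩ, hG⟩ := h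
    exact ⟨_, hGfin.toFinset, by simpa using hGΩ, by simpa using hG, rfl⟩
  obtain ⟨B, hBΩ, hB, hcard⟩ := Nat.find_spec hex
  refine ⟨B, hBΩ, fun a ha hcl => ?_, hB⟩
  have herase : pClosure S ↑(B.erase a) = Ω := by
    rw [Finset.coe_erase, ← hB, ← pClosure_insert_of_mem hcl, Set.insert_sdiff_singleton,
      Set.insert_eq_of_mem ha]
  have hmin := Nat.find_min' hex
    ⟨B.erase a, (Finset.coe_subset.2 (Finset.erase_subset a B)).trans hBΩ, herase, rfl⟩
  rw [← hcard, Finset.card_erase_of_mem ha] at hmin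
  have hpos := Finset.card_pos.2 ⟨a, ha⟩
  omega

end PClosure

section DualBasis

variable {σ : 𝔽 → Matrix (Fin n) (Fin n) 𝔽} {δ : 𝔽 → Fin n → 𝔽} {S : RawMul 𝔽 n}
  (hS : HasCommRule S σ δ) {ι : Type*}

noncomputable def evalFamily (b : ι → Fin n → 𝔽) : SkewPoly 𝔽 n →ₗ[𝔽] ι → 𝔽 :=
  LinearMap.pi fun j => evalₗ hS (b j)

theorem ker_evalFamily {b : ι → Fin n → 𝔽} {Ω : Set (Fin n → 𝔽)}
    (hcl : pClosure S (Set.range b) = Ω) :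
    LinearMap.ker (evalFamily hS b) = Submodule.span 𝔽 (zeroIdeal S Ω) := by
  rw [evalFamily, LinearMap.ker_pi, ← hcl, zeroIdeal_pClosure, span_zeroIdeal hS, iInf_range]

theorem evalFamily_surjective_of_dual [Fintype ι] [DecidableEq ι] {b : ι → Fin n → 𝔽}
    {F : ι → SkewPoly 𝔽 n}
    (hdual : ∀ i j, eval S (b j) (F i) = if i = j then 1 else 0) :
    Function.Surjective (evalFamily hS b) := fun v =>
  ⟨∑ i, v i • F i, by
    have hF : ∀ i, evalFamily hS b (F i) = fun j => if i = j then 1 else 0 :=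
      fun i => funext (hdual i)
    simp only [map_sum, map_smul, hF]
    exact (pi_eq_sum_univ v).symm⟩

noncomputable def dualQuotientBasis [Fintype ι] [DecidableEq ι] {b : ι → Fin n → 𝔽}
    {Ω : Set (Fin n → 𝔽)} (hcl : pClosure S (Set.range b) = Ω) {F : ι → SkewPoly 𝔽 n}
    (hdual : ∀ i j, eval S (b j) (F i) = if i = j then 1 else 0) :
    Module.Basis ι 𝔽 (SkewPoly 𝔽 n ⧸ Submodule.span 𝔽 (zeroIdeal S Ω)) :=
  (Pi.basisFun 𝔽 ι).map ((Submodule.quotEquivOfEq _ _ (ker_evalFamily hS hcl).symm).trans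
    ((evalFamily hS b).quotKerEquivOfSurjective (evalFamily_surjective_of_dual hS hdual))).symm

theorem dualQuotientBasis_apply [Fintype ι] [DecidableEq ι] {b : ι → Fin n → 𝔽}
    {Ω : Set (Fin n → 𝔽)} (hcl : pClosure S (Set.range b) = Ω) {F : ι → SkewPoly 𝔽 n}
    (hdual : ∀ i j, eval S (b j) (F i) = if i = j then 1 else 0) (i : ι) :
    dualQuotientBasis hS hcl hdual i = Submodule.Quotient.mk (F i) := by
  rw [dualQuotientBasis, Module.Basis.map_apply, LinearEquiv.symm_apply_eq]
  ext j
  change _ = eval S (b j) (F i)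
  rw [Pi.basisFun_apply, hdual, Pi.single_apply]
  exact if_congr eq_comm rfl rfl

end DualBasis

section Rank

variable {σ : 𝔽 → Matrix (Fin n) (Fin n) 𝔽} {δ : 𝔽 → Fin n → 𝔽} {S : RawMul 𝔽 n}
  {Ω : Set (Fin n → 𝔽)} {ι : Type*}

theorem PIndep.exists_dual [DecidableEq ι] {b : ι → Fin n → 𝔽} (h : PIndep S (Set.range b))
    (hS : HasCommRule S σ δ) (hb : Function.Injective b) :
    ∃ F : ι → SkewPoly 𝔽 n, ∀ i j, eval S (b j) (F i) = if i = j then 1 else 0 := by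
  have hsep : ∀ i, ∃ G ∈ zeroIdeal S (Set.range b \ {b i}), eval S (b i) G ≠ 0 := by
    intro i
    simpa [pClosure] using h (b i) (Set.mem_range_self i)
  choose G hG hGi using hsep
  refine ⟨fun i => (eval S (b i) (G i))⁻¹ • G i, fun i j => ?_⟩
  rw [← evalₗ_apply hS, map_smul, evalₗ_apply, smul_eq_mul]
  split_ifs with hij
  · subst hij
    exact inv_mul_cancel₀ (hGi i)
  · rw [hG i (b j) ⟨Set.mem_range_self j, hb.ne (Ne.symm hij)⟩, mul_zero]

theorem rank_quotient_eq_card (hS : HasCommRule S σ δ) {B : Finset (Fin n → 𝔽)}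
    (hB : IsPBasis S ↑B Ω) :
    Module.rank 𝔽 (SkewPoly 𝔽 n ⧸ Submodule.span 𝔽 (zeroIdeal S Ω)) = B.card := by
  classical
  have hrange : Set.range ((↑) : B → Fin n → 𝔽) = ↑B := Subtype.range_coe
  have hind : PIndep S (Set.range ((↑) : B → Fin n → 𝔽)) := by rw [hrange]; exact hB.2.1
  have hcl : pClosure S (Set.range ((↑) : B → Fin n → 𝔽)) = Ω := by rw [hrange]; exact hB.2.2
  obtain ⟨F, hF⟩ := hind.exists_dual hS Subtype.val_injective
  rw [rank_eq_card_basis (dualQuotientBasis hS hcl hF), Fintype.card_coe]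

theorem pRank_eq_card (hS : HasCommRule S σ δ) {B : Finset (Fin n → 𝔽)} (hB : IsPBasis S ↑B Ω) :
    pRank S Ω = B.card := by
  have h : {k | ∃ B' : Finset (Fin n → 𝔽), IsPBasis S ↑B' Ω ∧ B'.card = k} = {B.card} := by
    ext k
    refine ⟨?_, fun hk => ⟨B, hB, (Set.mem_singleton_iff.1 hk).symm⟩⟩
    rintro ⟨B', hB', rfl⟩
    exact_mod_cast (rank_quotient_eq_card hS hB').symm.trans (rank_quotient_eq_card hS hB)
  rw [pRank, h, csInf_singleton]

end Rank

end SkewPoly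

theorem stmt18_general {𝔽 : Type*} [DivisionRing 𝔽] {n : ℕ}
    (σ : 𝔽 → Matrix (Fin n) (Fin n) 𝔽) (δ : 𝔽 → Fin n → 𝔽)
    (S : RawMul 𝔽 n) (hS : HasCommRule S σ δ)
    (Ω : Set (Fin n → 𝔽))
    (M : ℕ) (b : Fin M → (Fin n → 𝔽))
    (hB : IsPBasis S (Set.range b) Ω) (F : Fin M → SkewPoly 𝔽 n)
    (hdual : ∀ i j : Fin M, eval S (b j) (F i) = if i = j then 1 else 0) :
    LinearIndependent 𝔽 F ∧
    LinearIndependent 𝔽 (fun i : Fin M =>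
      Submodule.Quotient.mk (p := Submodule.span 𝔽 (zeroIdeal S Ω)) (F i)) ∧
    Submodule.span 𝔽 (Set.range fun i : Fin M =>
      Submodule.Quotient.mk (p := Submodule.span 𝔽 (zeroIdeal S Ω)) (F i)) = ⊤ ∧
    Module.rank 𝔽 (SkewPoly 𝔽 n ⧸ Submodule.span 𝔽 (zeroIdeal S Ω)) = (M : Cardinal) ∧
    pRank S Ω = M ∧
    (FinGen S (Set.univ : Set (Fin n → 𝔽)) →
      Module.rank 𝔽
          (SkewPoly 𝔽 n ⧸ Submodule.span 𝔽 (zeroIdeal S (Set.univ : Set (Fin n → 𝔽)))) =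
        (pRank S (Set.univ : Set (Fin n → 𝔽)) : Cardinal) ∧
      Module.rank 𝔽
          (SkewPoly 𝔽 n ⧸ Submodule.span 𝔽 (zeroIdeal S (Set.univ : Set (Fin n → 𝔽)))) <
        Cardinal.aleph0) := by
  classical
  set basis := dualQuotientBasis hS hB.2.2 hdual
  have hbasis : ⇑basis = fun i => Submodule.Quotient.mk (F i) :=
    funext (dualQuotientBasis_apply hS hB.2.2 hdual)
  have hrank : Module.rank 𝔽 (SkewPoly 𝔽 n ⧸ Submodule.span 𝔽 (zeroIdeal S Ω)) = M := by
    rw [rank_eq_card_basis basis, Fintype.card_fin]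
  have himage : IsPBasis S ↑(Finset.univ.image b) Ω := by
    rwa [Finset.coe_image, Finset.coe_univ, Set.image_univ]
  refine ⟨?_, hbasis ▸ basis.linearIndependent, hbasis ▸ basis.span_eq, hrank, ?_, fun hfg => ?_⟩
  · exact LinearIndependent.of_comp (Submodule.mkQ _) (hbasis ▸ basis.linearIndependent)
  · rw [pRank_eq_card hS himage]
    exact_mod_cast (rank_quotient_eq_card hS himage).symm.trans hrank
  · obtain ⟨B, hB⟩ := hfg.exists_finset_isPBasis
    rw [rank_quotient_eq_card hS hB, pRank_eq_card hS hB]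
    exact ⟨rfl, Cardinal.natCast_lt_aleph0⟩

/-- A dual P-basis `F₁, …, F_M` of a P-basis of a finitely generated
P-closed set `Ω` is left linearly independent, its image is a left `𝔽`-basis of
`R/I(Ω)`, and `dim R/I(Ω) = Rk(Ω)`; in particular if `𝔽ⁿ` is finitely generated then
the minimal skew polynomial ring `R/I(𝔽ⁿ)` has finite dimension `Rk(𝔽ⁿ)`. -/
theorem stmt18 {𝔽 : Type*} [DivisionRing 𝔽] {n : ℕ} (hn : 0 < n)
    (σ : 𝔽 → Matrix (Fin n) (Fin n) 𝔽) (δ : 𝔽 → Fin n → 𝔽)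
    (hσ : IsMatrixMorphism σ) (hδ : IsVectorDerivation σ δ)
    (S : RawMul 𝔽 n) (hS : HasCommRule S σ δ)
    (Ω : Set (Fin n → 𝔽)) (hΩ : IsPClosed S Ω) (hfg : FinGen S Ω)
    (M : ℕ) (b : Fin M → (Fin n → 𝔽)) (hbinj : Function.Injective b)
    (hB : IsPBasis S (Set.range b) Ω) (F : Fin M → SkewPoly 𝔽 n)
    (hdual : ∀ i j : Fin M, eval S (b j) (F i) = if i = j then 1 else 0) :
    LinearIndependent 𝔽 F ∧
    LinearIndependent 𝔽 (fun i : Fin M =>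
      Submodule.Quotient.mk (p := Submodule.span 𝔽 (zeroIdeal S Ω)) (F i)) ∧
    Submodule.span 𝔽 (Set.range fun i : Fin M =>
      Submodule.Quotient.mk (p := Submodule.span 𝔽 (zeroIdeal S Ω)) (F i)) = ⊤ ∧
    Module.rank 𝔽 (SkewPoly 𝔽 n ⧸ Submodule.span 𝔽 (zeroIdeal S Ω)) = (M : Cardinal) ∧
    pRank S Ω = M ∧
    (FinGen S (Set.univ : Set (Fin n → 𝔽)) →
      Module.rank 𝔽
          (SkewPoly 𝔽 n ⧸ Submodule.span 𝔽 (zeroIdeal S (Set.univ : Set (Fin n → 𝔽)))) =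
        (pRank S (Set.univ : Set (Fin n → 𝔽)) : Cardinal) ∧
      Module.rank 𝔽
          (SkewPoly 𝔽 n ⧸ Submodule.span 𝔽 (zeroIdeal S (Set.univ : Set (Fin n → 𝔽)))) <
        Cardinal.aleph0) :=
  stmt18_general σ δ S hS Ω M b hB F hdual
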